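/- arXiv:2505.05005 — 7 statements merged into one kernel-verified Lean document; each statement's English description precedes it below -/
import Mathlib

section
/- If two rational-valued sequences (ρ_{n,0}) and (ρ_{n,3}) both satisfy the recurrence (n+1)^5·x_{n+1} − 32(2n+1)(8n^4+16n^3+20n^2+12n+3)·x_n + 2^{16}·n^5·x_{n−1} = 0 for n ≥ 1, with initial data ρ_{0,0} = 0, ρ_{0,3} = 768, ρ_{1,0} = −1024, ρ_{1,3} = 73728, then for all n ≥ 0 one has ρ_{n,0}·ρ_{n+1,3} − ρ_{n+1,0}·ρ_{n,3} = 3·2^{16n+18} / (n+1)^5; in particular this quantity is nonzero. -/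
/-!
The Casoratian `W n = ρ₀ n ρ₃ (n+1) - ρ₀ (n+1) ρ₃ n` of two solutions of a three-term recurrence
`a x (n+1) - b x n + c x (n-1) = 0` satisfies the first-order recurrence `a W n = c W (n-1)`.
Here `a = (n+1)^5` and `c = 2^16 n^5`, so `(n+1)^5 W n` is multiplied by `2^16` at each step,
and its initial value is `W 0 = 1024 · 768 = 3 · 2^18`.
-/

section Casoratian

variable {R : Type*} [CommRing R]

def casoratian (x y : ℕ → R) (n : ℕ) : R := x n * y (n + 1) - x (n + 1) * y n

theorem casoratian_succ_of_recurrence {x y : ℕ → R} {a b c : R} {n : ℕ}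
    (hx : a * x (n + 2) - b * x (n + 1) + c * x n = 0)
    (hy : a * y (n + 2) - b * y (n + 1) + c * y n = 0) :
    a * casoratian x y (n + 1) = c * casoratian x y n := by
  unfold casoratian
  linear_combination x (n + 1) * hy - y (n + 1) * hx

end Casoratian

theorem eq_pow_mul_of_succ_eq_mul {M : Type*} [Monoid M] {u : ℕ → M} {r : M}
    (h : ∀ n, u (n + 1) = r * u n) (n : ℕ) : u n = r ^ n * u 0 := by
  induction n with
  | zero => rw [pow_zero, one_mul]
  | succ n ih => rw [h, ih, ← mul_assoc, pow_succ']

theorem determinant_formula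
    (ρ₀ ρ₃ : ℕ → ℚ)
    (hrec₀ : ∀ n : ℕ, 1 ≤ n →
      ((n : ℚ) + 1) ^ 5 * ρ₀ (n + 1)
        - 32 * (2 * n + 1) * (8 * (n : ℚ) ^ 4 + 16 * n ^ 3 + 20 * n ^ 2 + 12 * n + 3) * ρ₀ n
        + 2 ^ 16 * (n : ℚ) ^ 5 * ρ₀ (n - 1) = 0)
    (hrec₃ : ∀ n : ℕ, 1 ≤ n →
      ((n : ℚ) + 1) ^ 5 * ρ₃ (n + 1)
        - 32 * (2 * n + 1) * (8 * (n : ℚ) ^ 4 + 16 * n ^ 3 + 20 * n ^ 2 + 12 * n + 3) * ρ₃ n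
        + 2 ^ 16 * (n : ℚ) ^ 5 * ρ₃ (n - 1) = 0)
    (h00 : ρ₀ 0 = 0) (h03 : ρ₃ 0 = 768) (h10 : ρ₀ 1 = -1024) (h13 : ρ₃ 1 = 73728) :
    ∀ n : ℕ, ρ₀ n * ρ₃ (n + 1) - ρ₀ (n + 1) * ρ₃ n = 3 * 2 ^ (16 * n + 18) / ((n : ℚ) + 1) ^ 5
      ∧ ρ₀ n * ρ₃ (n + 1) - ρ₀ (n + 1) * ρ₃ n ≠ 0 := by
  have step : ∀ n : ℕ, ((n + 1 : ℕ) + 1 : ℚ) ^ 5 * casoratian ρ₀ ρ₃ (n + 1)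
      = 2 ^ 16 * ((n : ℚ) + 1) ^ 5 * casoratian ρ₀ ρ₃ n := by
    intro n
    have h₀ := hrec₀ (n + 1) n.succ_pos
    have h₃ := hrec₃ (n + 1) n.succ_pos
    push_cast [Nat.add_sub_cancel] at h₀ h₃ ⊢
    exact casoratian_succ_of_recurrence h₀ h₃
  have closed (n : ℕ) : casoratian ρ₀ ρ₃ n = 3 * 2 ^ (16 * n + 18) / ((n : ℚ) + 1) ^ 5 := by
    have geom := eq_pow_mul_of_succ_eq_mul
      (u := fun n : ℕ => ((n : ℚ) + 1) ^ 5 * casoratian ρ₀ ρ₃ n) (r := 2 ^ 16)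
      (fun n => by simpa only [mul_assoc] using step n) n
    have W₀ : casoratian ρ₀ ρ₃ 0 = 3 * 2 ^ 18 := by
      norm_num [casoratian, h00, h03, h10, h13]
    rw [eq_div_iff (by positivity), mul_comm, geom]
    rw [W₀, Nat.cast_zero, zero_add, one_pow, one_mul, pow_add, pow_mul]
    ring
  intro n
  refine ⟨closed n, ?_⟩
  rw [← casoratian, closed]
  positivity
end

section
/- Let p be a prime and n a positive integer with p > max{√(2n), 3}. For any nonnegative integer m ≤ n, p divides the central binomial coefficient C(2m, m) if and only if the least nonnegative residue of m modulo p is at least (p+1)/2. -/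
/-! When `2m < p²`, Kummer's theorem reduces `p ∣ C(2m, m)` to a carry in the units digit of
`m + m` in base `p`, i.e. to `p ≤ 2 (m mod p)`; for odd `p` this is `(p + 1) / 2 ≤ m mod p`. -/

open Finset

namespace Nat

theorem Prime.dvd_choose_add_iff_le_mod_add_mod {p k l : ℕ} (hp : p.Prime) (hlk : l + k < p ^ 2) :
    p ∣ choose (l + k) k ↔ p ≤ k % p + l % p := by
  have hlog : log p (l + k) < 2 := log_lt_of_lt_pow' two_ne_zero hlk
  rw [hp.dvd_iff_one_le_factorization (choose_pos (le_add_left k l)).ne',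
    factorization_choose' hp hlog, show Ico 1 2 = {1} from rfl, filter_singleton]
  split_ifs with h <;> simp_all

theorem Prime.dvd_centralBinom_iff_le_two_mul_mod {p m : ℕ} (hp : p.Prime) (hm : 2 * m < p ^ 2) :
    p ∣ centralBinom m ↔ p ≤ 2 * (m % p) := by
  rw [centralBinom_eq_two_mul_choose, two_mul,
    hp.dvd_choose_add_iff_le_mod_add_mod (two_mul m ▸ hm), ← two_mul]

end Nat

theorem Real.natCast_lt_sq_of_sqrt_lt {x p : ℕ} (h : √(x : ℝ) < p) : x < p ^ 2 := by
  exact_mod_cast (Real.sqrt_lt' (by linarith [Real.sqrt_nonneg x])).mp h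

theorem prime_dvd_centralBinom_iff_general (p n m : ℕ) (hp : p.Prime)
    (hpn : Real.sqrt (2 * n) < p) (hp3 : 3 < p) (hm : m ≤ n) :
    p ∣ Nat.choose (2 * m) m ↔ (p + 1) / 2 ≤ m % p := by
  have h2n : 2 * n < p ^ 2 := Real.natCast_lt_sq_of_sqrt_lt (by exact_mod_cast hpn)
  have hodd : p % 2 = 1 := hp.eq_two_or_odd.resolve_left (by omega)
  rw [← Nat.centralBinom_eq_two_mul_choose, hp.dvd_centralBinom_iff_le_two_mul_mod (by omega)]
  omega

theorem prime_dvd_centralBinom_iff (p n m : ℕ) (hp : p.Prime)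
    (hpn : Real.sqrt (2 * n) < p) (hp3 : 3 < p) (hn : 0 < n) (hm : m ≤ n) :
    p ∣ Nat.choose (2 * m) m ↔ (p + 1) / 2 ≤ m % p :=
  prime_dvd_centralBinom_iff_general p n m hp hpn hp3 hm
end

section
/- Let α > β > 0 be real numbers, p a prime, and ξ ∈ ℚ_p. Suppose there exist integer sequences (a_n), (b_n) with |a_n + b_n ξ|_p ≤ exp(−αn + o(n)), max{|a_n|, |b_n|} ≤ exp(βn + o(n)), and a_n b_{n+1} − a_{n+1} b_n ≠ 0 for all n. Then ξ is irrational. -/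
/-!
If `ξ = u / v` were rational, the integers `c n = a n * v + b n * u` would satisfy
`|c n| ≤ (|u| + v) * max |a n| |b n|` and `‖c n‖_p ≤ ‖a n + b n * ξ‖_p`, so that
`|c n| * ‖c n‖_p → 0` because `β < α`. A nonzero integer has `|c| * ‖c‖_p ≥ 1`, hence `c n = 0`
for all large `n`. Then `(v, u) ≠ 0` lies in the kernel of the matrix with rows `(a n, b n)` and
`(a (n + 1), b (n + 1))`, whose determinant must therefore vanish.
-/

open Filter Topology

lemma Padic.one_le_abs_mul_norm_intCast {p : ℕ} [Fact p.Prime] {m : ℤ} (hm : m ≠ 0) :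
    1 ≤ |(m : ℝ)| * ‖(m : ℚ_[p])‖ := by
  have hnorm : ‖(m : ℚ_[p])‖ = (p : ℝ) ^ (-(padicValInt p m : ℤ)) := by
    rw [Padic.norm_eq_zpow_neg_valuation (by exact_mod_cast hm), Padic.valuation_intCast]
  have hpow : (p : ℝ) ^ padicValInt p m ≤ |(m : ℝ)| := by
    have := Int.le_of_dvd (abs_pos.2 hm) ((dvd_abs _ _).2 (padicValInt_dvd (p := p) m))
    exact_mod_cast this
  rw [hnorm, zpow_neg, zpow_natCast, ← div_eq_mul_inv, one_le_div (pow_pos (mod_cast (Fact.out : p.Prime).pos) _)]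
  exact hpow

lemma Padic.norm_intCast_mul_den_add_mul_num_le {p : ℕ} [Fact p.Prime] (q : ℚ) (a b : ℤ) :
    ‖((a * q.den + b * q.num : ℤ) : ℚ_[p])‖ ≤ ‖(a : ℚ_[p]) + b * q‖ := by
  have hden : ((q.den : ℤ) : ℚ_[p]) ≠ 0 := by exact_mod_cast q.den_nz
  have hsplit : ((a * q.den + b * q.num : ℤ) : ℚ_[p]) = ((a : ℚ_[p]) + b * q) * (q.den : ℤ) := by
    rw [Rat.cast_def]
    push_cast
    field_simp
  rw [hsplit, norm_mul]
  exact mul_le_of_le_one_right (norm_nonneg _) (Padic.norm_int_le_one _)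

lemma abs_mul_den_add_mul_num_le (q : ℚ) (a b : ℤ) :
    |((a * q.den + b * q.num : ℤ) : ℝ)| ≤ (q.den + |(q.num : ℝ)|) * max |(a : ℝ)| |(b : ℝ)| := by
  push_cast
  calc |(a : ℝ) * q.den + b * q.num| ≤ |(a : ℝ)| * q.den + |(b : ℝ)| * |(q.num : ℝ)| := by
        simpa [abs_mul] using abs_add_le ((a : ℝ) * q.den) ((b : ℝ) * q.num)
    _ ≤ max |(a : ℝ)| |(b : ℝ)| * q.den + max |(a : ℝ)| |(b : ℝ)| * |(q.num : ℝ)| := by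
        gcongr
        exacts [le_max_left _ _, le_max_right _ _]
    _ = _ := by ring

lemma tendsto_mul_zero_of_exp_growth_lt_exp_decay {x y : ℕ → ℝ} {α β : ℝ} (hαβ : β < α)
    (hx₀ : ∀ n, 0 ≤ x n) (hy₀ : ∀ n, 0 ≤ y n)
    (hx : ∀ ε > 0, ∀ᶠ n : ℕ in atTop, x n ≤ Real.exp ((β + ε) * n))
    (hy : ∀ ε > 0, ∀ᶠ n : ℕ in atTop, y n ≤ Real.exp ((-α + ε) * n)) :
    Tendsto (fun n ↦ x n * y n) atTop (𝓝 0) := by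
  set ε := (α - β) / 3
  have hε : 0 < ε := by simp only [ε]; linarith
  have hdecay : Tendsto (fun n : ℕ ↦ Real.exp (-ε * n)) atTop (𝓝 0) :=
    Real.tendsto_exp_atBot.comp <|
      (tendsto_natCast_atTop_atTop (R := ℝ)).const_mul_atTop_of_neg (neg_neg_of_pos hε)
  refine squeeze_zero' (.of_forall fun n ↦ mul_nonneg (hx₀ n) (hy₀ n)) ?_ hdecay
  filter_upwards [hx ε hε, hy ε hε] with n hxn hyn
  calc x n * y n ≤ Real.exp ((β + ε) * n) * Real.exp ((-α + ε) * n) :=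
        mul_le_mul hxn hyn (hy₀ n) (Real.exp_pos _).le
    _ = Real.exp (-ε * n) := by rw [← Real.exp_add]; congr 1; simp only [ε]; ring

lemma mul_sub_mul_eq_zero_of_mul_add_mul_eq_zero {R : Type*} [CommRing R] [NoZeroDivisors R]
    {a b a' b' u v : R} (hv : v ≠ 0) (h : a * v + b * u = 0) (h' : a' * v + b' * u = 0) :
    a * b' - a' * b = 0 := by
  have : (a * b' - a' * b) * v = 0 := by linear_combination b' * h - b * h'
  exact (mul_eq_zero.1 this).resolve_right hv

theorem padic_irrationality_criterion_general (p : ℕ) [Fact p.Prime] (ξ : ℚ_[p])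
    (α β : ℝ) (hαβ : β < α)
    (a b : ℕ → ℤ)
    (h1 : ∀ ε > 0, ∀ᶠ n : ℕ in atTop,
      ‖(a n : ℚ_[p]) + (b n : ℚ_[p]) * ξ‖ ≤ Real.exp ((-α + ε) * n))
    (h2 : ∀ ε > 0, ∀ᶠ n : ℕ in atTop,
      (max |a n| |b n| : ℝ) ≤ Real.exp ((β + ε) * n))
    (h3 : ∀ n : ℕ, 0 < n → a n * b (n + 1) - a (n + 1) * b n ≠ 0) :
    ∀ q : ℚ, ξ ≠ (q : ℚ_[p]) := by
  rintro q rfl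
  set c : ℕ → ℤ := fun n ↦ a n * q.den + b n * q.num
  have hsmall : Tendsto (fun n ↦ |(c n : ℝ)| * ‖(c n : ℚ_[p])‖) atTop (𝓝 0) := by
    have hprod := (tendsto_mul_zero_of_exp_growth_lt_exp_decay hαβ
      (fun n ↦ (abs_nonneg _).trans (le_max_left _ _)) (fun n ↦ norm_nonneg _) h2 h1).const_mul
      (q.den + |(q.num : ℝ)|)
    rw [mul_zero] at hprod
    refine squeeze_zero (fun n ↦ by positivity) (fun n ↦ ?_) hprod
    rw [← mul_assoc]
    exact mul_le_mul (abs_mul_den_add_mul_num_le q (a n) (b n))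
      (Padic.norm_intCast_mul_den_add_mul_num_le q (a n) (b n)) (norm_nonneg _) (by positivity)
  have hzero : ∀ᶠ n in atTop, c n = 0 :=
    (hsmall.eventually (gt_mem_nhds one_pos)).mono fun n hn ↦ by
      by_contra hc
      exact (Padic.one_le_abs_mul_norm_intCast (p := p) hc).not_gt hn
  obtain ⟨N, hN⟩ := eventually_atTop.1 hzero
  exact h3 (N + 1) N.succ_pos <| mul_sub_mul_eq_zero_of_mul_add_mul_eq_zero
    (Int.natCast_ne_zero.2 q.den_nz) (hN (N + 1) (by omega)) (hN (N + 2) (by omega))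

theorem padic_irrationality_criterion (p : ℕ) [Fact p.Prime] (ξ : ℚ_[p])
    (α β : ℝ) (hαβ : β < α) (hβ : 0 < β)
    (a b : ℕ → ℤ)
    (h1 : ∀ ε > 0, ∀ᶠ n : ℕ in atTop,
      ‖(a n : ℚ_[p]) + (b n : ℚ_[p]) * ξ‖ ≤ Real.exp ((-α + ε) * n))
    (h2 : ∀ ε > 0, ∀ᶠ n : ℕ in atTop,
      (max |a n| |b n| : ℝ) ≤ Real.exp ((β + ε) * n))
    (h3 : ∀ n : ℕ, 0 < n → a n * b (n + 1) - a (n + 1) * b n ≠ 0) :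
    ∀ q : ℚ, ξ ≠ (q : ℚ_[p]) :=
  padic_irrationality_criterion_general p ξ α β hαβ a b h1 h2 h3
end

section
/- Let α > β > 0, p a prime, ξ ∈ ℚ_p, and suppose integer sequences (a_n), (b_n) satisfy |a_n + b_n ξ|_p ≤ exp(−αn + o(n)), max{|a_n|, |b_n|} ≤ exp(βn + o(n)), and a_n b_{n+1} − a_{n+1} b_n ≠ 0 for all n ≥ 1. Then the irrationality measure of ξ satisfies μ(ξ) ≤ α/(α−β). -/
/-!
Let `A / B` approximate `ξ` to order `H ^ (-μ)`, where `H = max(|A|, B)`. Choose `n` with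
`e ^ (-(α - ε) n) ≈ H ^ (-μ)`; by the determinant condition one of `m = n, n + 1` makes the
integer `N = a_m B + b_m A` nonzero. Writing `N = B (a_m + b_m ξ) - b_m B (ξ - A / B)` gives
`‖N‖_p < H ^ (-μ)`, while `|N| ≤ 2 e ^ ((β + ε) m) H`; since `|N| ‖N‖_p ≥ 1`, this forces
`H ^ (μ - 1) ≲ H ^ (μ (β + ε) / (α - ε))`, which bounds `H` as soon as
`μ (β + ε) < (μ - 1) (α - ε)`, i.e. for `μ > α / (α - β)` and `ε` small.
-/

open Filter

theorem linearForm_ne_zero_or {R : Type*} [CommRing R] [NoZeroDivisors R] {a b a' b' A B : R}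
    (hdet : a * b' - a' * b ≠ 0) (hB : B ≠ 0) :
    a * B + b * A ≠ 0 ∨ a' * B + b' * A ≠ 0 := by
  by_contra! h
  refine hdet ((mul_eq_zero.1 ?_).resolve_right hB)
  linear_combination b' * h.1 - b * h.2

theorem exists_gt_linearForm_ne_zero {a b : ℕ → ℤ}
    (h3 : ∀ n : ℕ, 0 < n → a n * b (n + 1) - a (n + 1) * b n ≠ 0) {A B : ℤ} (hB : B ≠ 0)
    {t : ℝ} (ht : 0 ≤ t) : ∃ m : ℕ, t < m ∧ (m : ℝ) ≤ t + 2 ∧ a m * B + b m * A ≠ 0 := by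
  have htn : t < (⌊t⌋₊ + 1 : ℕ) := by push_cast; exact Nat.lt_floor_add_one t
  have hnt : ((⌊t⌋₊ + 1 : ℕ) : ℝ) ≤ t + 1 := by push_cast; linarith [Nat.floor_le ht]
  rcases linearForm_ne_zero_or (A := A) (h3 _ ⌊t⌋₊.succ_pos) hB with h | h
  · exact ⟨_, htn, by linarith, h⟩
  · exact ⟨_, htn.trans (by norm_num), by push_cast at hnt ⊢; linarith, h⟩

namespace Padic

variable {p : ℕ} [Fact p.Prime]

theorem inv_abs_le_norm_intCast {N : ℤ} (hN : N ≠ 0) : |(N : ℝ)|⁻¹ ≤ ‖(N : ℚ_[p])‖ := by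
  have hpow_le : ((p : ℤ) ^ padicValInt p N : ℤ) ≤ |N| :=
    Int.le_of_dvd (abs_pos.2 hN) (padicValInt_dvd N |>.trans (self_dvd_abs N))
  rw [norm_eq_zpow_neg_valuation (Int.cast_ne_zero.2 hN), valuation_intCast, zpow_neg,
    zpow_natCast, ← Int.cast_abs]
  exact inv_anti₀ (pow_pos (Nat.cast_pos.2 (Fact.out : p.Prime).pos) _) (mod_cast hpow_le)

theorem inv_le_max_norm_linearForm (ξ : ℚ_[p]) {a b A B : ℤ} (hB : 0 < B)
    (hN : a * B + b * A ≠ 0) :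
    (2 * max |(a : ℝ)| |(b : ℝ)| * max |(A : ℝ)| (B : ℝ))⁻¹ ≤
      max ‖(a : ℚ_[p]) + b * ξ‖ ‖ξ - A / B‖ := by
  have hid : ((a * B + b * A : ℤ) : ℚ_[p]) =
      (B : ℚ_[p]) * (a + b * ξ) + ((-(b * B) : ℤ) : ℚ_[p]) * (ξ - A / B) := by
    have : (B : ℚ_[p]) ≠ 0 := Int.cast_ne_zero.2 hB.ne'
    push_cast
    field_simp
    ring
  have habs :
      |((a * B + b * A : ℤ) : ℝ)| ≤ 2 * max |(a : ℝ)| |(b : ℝ)| * max |(A : ℝ)| (B : ℝ) := by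
    have hB' : (0 : ℝ) < B := Int.cast_pos.2 hB
    push_cast
    calc |(a : ℝ) * B + b * A| ≤ |(a : ℝ)| * B + |(b : ℝ)| * |(A : ℝ)| := by
          simpa only [abs_mul, abs_of_pos hB'] using abs_add_le ((a : ℝ) * B) (b * A)
      _ ≤ _ := by
          nlinarith [le_max_left |(a : ℝ)| |(b : ℝ)|, le_max_right |(a : ℝ)| |(b : ℝ)|,
            le_max_left |(A : ℝ)| (B : ℝ), le_max_right |(A : ℝ)| (B : ℝ), abs_nonneg (a : ℝ),
            abs_nonneg (b : ℝ), abs_nonneg (A : ℝ)]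
  calc _ ≤ |((a * B + b * A : ℤ) : ℝ)|⁻¹ :=
        inv_anti₀ (abs_pos.2 (Int.cast_ne_zero.2 hN)) habs
    _ ≤ ‖((a * B + b * A : ℤ) : ℚ_[p])‖ := inv_abs_le_norm_intCast hN
    _ ≤ _ := by
        rw [hid]
        refine (IsUltrametricDist.norm_add_le_max _ _).trans (max_le_max ?_ ?_) <;>
          rw [norm_mul] <;>
          exact mul_le_of_le_one_left (norm_nonneg _) (norm_int_le_one _)

theorem rpow_lt_of_linearForm_ne_zero (ξ : ℚ_[p]) {a b A B : ℤ} (hB : 0 < B)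
    (hN : a * B + b * A ≠ 0) {μ : ℝ} (ha : ‖(a : ℚ_[p]) + b * ξ‖ < max |(A : ℝ)| (B : ℝ) ^ (-μ))
    (hA : ‖ξ - A / B‖ < max |(A : ℝ)| (B : ℝ) ^ (-μ)) :
    max |(A : ℝ)| (B : ℝ) ^ μ < 2 * max |(a : ℝ)| |(b : ℝ)| * max |(A : ℝ)| (B : ℝ) := by
  have hH : 0 < max |(A : ℝ)| (B : ℝ) := lt_max_of_lt_right (Int.cast_pos.2 hB)
  have hK : 0 < max |(a : ℝ)| |(b : ℝ)| := by
    by_contra! hK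
    have ha0 : a = 0 := by exact_mod_cast abs_nonpos_iff.1 ((le_max_left _ _).trans hK)
    have hb0 : b = 0 := by exact_mod_cast abs_nonpos_iff.1 ((le_max_right _ _).trans hK)
    simp [ha0, hb0] at hN
  rw [← inv_lt_inv₀ (by positivity) (by positivity), ← Real.rpow_neg hH.le]
  exact (inv_le_max_norm_linearForm ξ hB hN).trans_lt (max_lt ha hA)

theorem log_le_of_approx (ξ : ℚ_[p]) {γ δ μ : ℝ} (hδ : 0 ≤ δ) (hμ : 1 < μ)
    (hγδ : μ * δ < (μ - 1) * γ) {a b : ℕ → ℤ} {N₀ : ℕ}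
    (h1 : ∀ n ≥ N₀, ‖(a n : ℚ_[p]) + b n * ξ‖ ≤ Real.exp (-γ * n))
    (h2 : ∀ n ≥ N₀, max |(a n : ℝ)| |(b n : ℝ)| ≤ Real.exp (δ * n))
    (h3 : ∀ n : ℕ, 0 < n → a n * b (n + 1) - a (n + 1) * b n ≠ 0)
    {A B : ℤ} (hB : 0 < B) (happ : ‖ξ - A / B‖ < max |(A : ℝ)| (B : ℝ) ^ (-μ)) :
    Real.log (max |(A : ℝ)| (B : ℝ)) ≤
      max (γ * N₀ / μ) (γ * (Real.log 2 + 2 * δ) / ((μ - 1) * γ - μ * δ)) := by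
  set H := max |(A : ℝ)| (B : ℝ)
  set L := Real.log H
  have hH1 : 1 ≤ H := le_max_of_le_right (by exact_mod_cast hB)
  have hH : 0 < H := zero_lt_one.trans_le hH1
  have hL0 : 0 ≤ L := Real.log_nonneg hH1
  have hγ : 0 < γ := pos_of_mul_pos_right ((by positivity : 0 ≤ μ * δ).trans_lt hγδ) (by linarith)
  by_contra! hL
  rw [max_lt_iff, div_lt_iff₀ (by linarith), div_lt_iff₀ (by linarith)] at hL
  -- `exp (-γ t) = H ^ (-μ)`
  set t := μ * L / γ
  have hγt : γ * t = μ * L := mul_div_cancel₀ _ hγ.ne'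
  obtain ⟨m, htm, hmt, hm⟩ := exists_gt_linearForm_ne_zero h3 hB.ne' (by positivity : 0 ≤ t)
  have hN₀m : N₀ ≤ m := by
    have : (N₀ : ℝ) < m := by nlinarith
    exact_mod_cast this.le
  have hHμ : H ^ (-μ) = Real.exp (-γ * t) := by
    rw [Real.rpow_def_of_pos hH, neg_mul, hγt, mul_neg, mul_comm]
  have ha : ‖(a m : ℚ_[p]) + b m * ξ‖ < H ^ (-μ) := by
    rw [hHμ]
    exact (h1 m hN₀m).trans_lt (Real.exp_lt_exp.2 (by nlinarith))
  have hpow := rpow_lt_of_linearForm_ne_zero ξ hB hm ha happ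
  have hK : max |(a m : ℝ)| |(b m : ℝ)| ≤ Real.exp (δ * (t + 2)) :=
    (h2 m hN₀m).trans (Real.exp_le_exp.2 (by nlinarith))
  have hlog : μ * L < Real.log 2 + δ * (t + 2) + L := by
    have hpow' : H ^ μ < 2 * Real.exp (δ * (t + 2)) * H := hpow.trans_le (by gcongr)
    have := Real.log_lt_log (by positivity) hpow'
    rwa [Real.log_rpow hH, Real.log_mul (by positivity) hH.ne', Real.log_mul two_ne_zero
      (Real.exp_pos _).ne', Real.log_exp] at this
  nlinarith

end Padic

theorem exists_pos_mul_add_lt_mul_sub {α β μ : ℝ} (hαβ : β < α) (hμ : α / (α - β) < μ) :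
    ∃ ε > 0, μ * (β + ε) < (μ - 1) * (α - ε) := by
  have h0 : μ * (β + 0) < (μ - 1) * (α - 0) := by
    rw [div_lt_iff₀ (sub_pos.2 hαβ)] at hμ
    linarith
  have hnhds : ∀ᶠ ε in nhds 0, μ * (β + ε) < (μ - 1) * (α - ε) :=
    ContinuousAt.eventually_lt (by fun_prop) (by fun_prop) h0
  obtain ⟨ε, hεμ, hε⟩ :=
    ((hnhds.filter_mono nhdsWithin_le_nhds).and (self_mem_nhdsWithin (s := Set.Ioi 0))).exists
  exact ⟨ε, hε, hεμ⟩

theorem padic_irrationality_measure_bound (p : ℕ) [Fact p.Prime] (ξ : ℚ_[p])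
    (α β : ℝ) (hαβ : β < α) (hβ : 0 < β)
    (a b : ℕ → ℤ)
    (h1 : ∀ ε > 0, ∀ᶠ n : ℕ in atTop,
      ‖(a n : ℚ_[p]) + (b n : ℚ_[p]) * ξ‖ ≤ Real.exp ((-α + ε) * n))
    (h2 : ∀ ε > 0, ∀ᶠ n : ℕ in atTop,
      (max |a n| |b n| : ℝ) ≤ Real.exp ((β + ε) * n))
    (h3 : ∀ n : ℕ, 0 < n → a n * b (n + 1) - a (n + 1) * b n ≠ 0) :
    ∀ μ : ℝ, α / (α - β) < μ →
      {q : ℤ × ℤ | 0 < q.2 ∧ 0 < ‖ξ - (q.1 : ℚ_[p]) / (q.2 : ℚ_[p])‖ ∧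
        ‖ξ - (q.1 : ℚ_[p]) / (q.2 : ℚ_[p])‖ < (max |q.1| q.2 : ℝ) ^ (-μ)}.Finite := by
  intro μ hμ
  have hμ1 : 1 < μ := ((one_lt_div (sub_pos.2 hαβ)).2 (by linarith)).trans hμ
  obtain ⟨ε, hε, hεμ⟩ := exists_pos_mul_add_lt_mul_sub hαβ hμ
  obtain ⟨N₀, hN₀⟩ := eventually_atTop.1 ((h1 ε hε).and (h2 ε hε))
  obtain ⟨C, hC⟩ : ∃ C, ∀ A B : ℤ, 0 < B → ‖ξ - A / B‖ < max |(A : ℝ)| (B : ℝ) ^ (-μ) →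
      Real.log (max |(A : ℝ)| (B : ℝ)) ≤ C :=
    ⟨_, fun A B hB happ => Padic.log_le_of_approx ξ (by positivity) hμ1 hεμ
      (fun n hn => by simpa only [neg_sub, neg_add_eq_sub] using (hN₀ n hn).1)
      (fun n hn => (hN₀ n hn).2) h3 hB happ⟩
  refine (isCompact_closedBall (0 : ℤ × ℤ) (Real.exp C)).finite_of_discrete.subset ?_
  rintro ⟨A, B⟩ ⟨hB, -, happ⟩
  have hB' : (0 : ℝ) < B := Int.cast_pos.2 hB
  rw [mem_closedBall_zero_iff, Prod.norm_def, Int.norm_eq_abs, Int.norm_eq_abs, abs_of_pos hB']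
  exact (Real.log_le_iff_le_exp (lt_max_of_lt_right hB')).1 (hC A B hB happ)
end

section
/- Let f : ℤ_p → ℚ_p be strictly differentiable (f(x) − f(y) = (x−y)g(x,y) for a continuous g on ℤ_p × ℤ_p). Then for any positive integer k, the Volkenborn integrals satisfy ∫_{ℤ_p} f(t+k) dt = ∫_{ℤ_p} f(t) dt + Σ_{ℓ=0}^{k−1} f′(ℓ). -/
open Filter

/-- `I` is the Volkenborn integral of `f : ℤ_p → ℚ_p`:
`I = lim_{n→∞} p^{-n} ∑_{j=0}^{p^n - 1} f(j)`. -/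
def IsVolkenbornIntegral (p : ℕ) [Fact p.Prime] (f : ℤ_[p] → ℚ_[p]) (I : ℚ_[p]) : Prop :=
  Tendsto (fun n : ℕ => ((p : ℚ_[p]) ^ n)⁻¹ * ∑ j ∈ Finset.range (p ^ n), f (j : ℤ_[p]))
    atTop (nhds I)

open Topology Finset

/-!
Shifting the summation range by `k` changes `∑_{j<p^n} f(j)` only by the boundary terms
`∑_{l<k} (f(l + p^n) - f(l)) = p^n ∑_{l<k} g(l + p^n, l)`. After dividing by `p^n`, the
difference of the two Riemann sums is `∑_{l<k} g(l + p^n, l)`, which tends to `∑_{l<k} g(l, l)`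
because `p^n → 0` in `ℤ_p` and `g` is continuous.
-/

theorem Finset.sum_range_comp_add_sub_sum_range {M : Type*} [AddCommGroup M] (f : ℕ → M)
    (N k : ℕ) :
    ∑ j ∈ range N, f (j + k) - ∑ j ∈ range N, f j = ∑ l ∈ range k, (f (l + N) - f l) := by
  have hk := sum_range_add f k N
  have hN := sum_range_add f N k
  rw [add_comm k N, hN] at hk
  simp only [sum_sub_distrib, add_comm k, add_comm N] at hk ⊢
  linear_combination (norm := abel) -hk

theorem PadicInt.tendsto_pow_p_atTop_nhds_zero (p : ℕ) [Fact p.Prime] :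
    Tendsto (fun n : ℕ => (p : ℤ_[p]) ^ n) atTop (𝓝 0) :=
  tendsto_pow_atTop_nhds_zero_of_norm_lt_one (PadicInt.norm_natCast_lt_one_iff.mpr dvd_rfl)

namespace Volkenborn

noncomputable def riemannSum (p : ℕ) [Fact p.Prime] (f : ℤ_[p] → ℚ_[p]) (n : ℕ) : ℚ_[p] :=
  ((p : ℚ_[p]) ^ n)⁻¹ * ∑ j ∈ range (p ^ n), f (j : ℤ_[p])

variable {p : ℕ} [Fact p.Prime]

theorem riemannSum_translate_sub {f : ℤ_[p] → ℚ_[p]} {g : ℤ_[p] × ℤ_[p] → ℚ_[p]}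
    (hfg : ∀ x y : ℤ_[p], f x - f y = ((x : ℚ_[p]) - (y : ℚ_[p])) * g (x, y)) (k n : ℕ) :
    riemannSum p (fun t => f (t + k)) n - riemannSum p f n =
      ∑ l ∈ range k, g ((l : ℤ_[p]) + (p : ℤ_[p]) ^ n, (l : ℤ_[p])) := by
  have hpn : (p : ℚ_[p]) ^ n ≠ 0 :=
    pow_ne_zero _ (Nat.cast_ne_zero.mpr (Fact.out : p.Prime).ne_zero)
  have hshift := sum_range_comp_add_sub_sum_range (fun j : ℕ => f (j : ℤ_[p])) (p ^ n) k
  push_cast at hshift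
  rw [riemannSum, riemannSum, ← mul_sub, hshift, mul_sum]
  refine sum_congr rfl fun l _ => ?_
  rw [hfg]
  push_cast
  rw [add_sub_cancel_left, inv_mul_cancel_left₀ hpn]

theorem tendsto_sum_apply_add_pow_p {g : ℤ_[p] × ℤ_[p] → ℚ_[p]} (hg : Continuous g) (k : ℕ) :
    Tendsto (fun n : ℕ => ∑ l ∈ range k, g ((l : ℤ_[p]) + (p : ℤ_[p]) ^ n, (l : ℤ_[p])))
      atTop (𝓝 (∑ l ∈ range k, g ((l : ℤ_[p]), (l : ℤ_[p])))) := by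
  refine tendsto_finsetSum _ fun l _ =>
    (hg.tendsto _).comp (Tendsto.prodMk_nhds ?_ tendsto_const_nhds)
  simpa using tendsto_const_nhds (x := (l : ℤ_[p])).add (PadicInt.tendsto_pow_p_atTop_nhds_zero p)

end Volkenborn

open Volkenborn in
theorem volkenborn_translation_general (p : ℕ) [Fact p.Prime]
    (f : ℤ_[p] → ℚ_[p]) (g : ℤ_[p] × ℤ_[p] → ℚ_[p])
    (hg : Continuous g)
    (hfg : ∀ x y : ℤ_[p], f x - f y = ((x : ℚ_[p]) - (y : ℚ_[p])) * g (x, y))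
    (k : ℕ) (I J : ℚ_[p])
    (hI : IsVolkenbornIntegral p f I)
    (hJ : IsVolkenbornIntegral p (fun t => f (t + (k : ℤ_[p]))) J) :
    J = I + ∑ l ∈ Finset.range k, g ((l : ℤ_[p]), (l : ℤ_[p])) := by
  have hdiff : Tendsto (fun n => riemannSum p (fun t => f (t + k)) n - riemannSum p f n)
      atTop (𝓝 (J - I)) := hJ.sub hI
  simp only [riemannSum_translate_sub hfg] at hdiff
  exact sub_eq_iff_eq_add'.mp (tendsto_nhds_unique hdiff (tendsto_sum_apply_add_pow_p hg k))

theorem volkenborn_translation (p : ℕ) [Fact p.Prime]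
    (f : ℤ_[p] → ℚ_[p]) (g : ℤ_[p] × ℤ_[p] → ℚ_[p])
    (hg : Continuous g)
    (hfg : ∀ x y : ℤ_[p], f x - f y = ((x : ℚ_[p]) - (y : ℚ_[p])) * g (x, y))
    (k : ℕ) (hk : 0 < k) (I J : ℚ_[p])
    (hI : IsVolkenbornIntegral p f I)
    (hJ : IsVolkenbornIntegral p (fun t => f (t + (k : ℤ_[p]))) J) :
    J = I + ∑ l ∈ Finset.range k, g ((l : ℤ_[p]), (l : ℤ_[p])) :=
  volkenborn_translation_general p f g hg hfg k I J hI hJ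
end

section
/- Let f : ℤ_p → ℚ_p be strictly differentiable and define △(f) = min{ inf_{k≥1} v_p((f(k) − f(k_−))/(k − k_−)), 1 + v_p(f(0)) }, where k_− is obtained from k by deleting the leading p-adic digit. Then v_p(∫_{ℤ_p} f(t) dt) ≥ △(f) − 1. -/
open Filter

/-- `kminus p k` is `k` with its leading `p`-adic digit deleted. -/
def kminus (p k : ℕ) : ℕ := k % p ^ (Nat.log p k)

/-- `TriangleGE p f c` expresses `△(f) ≥ c`, i.e. both
`v_p((f(k) - f(k₋))/(k - k₋)) ≥ c` for all `k ≥ 1` and `1 + v_p(f(0)) ≥ c`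
(with `v_p(0) = +∞`), stated in terms of norms. -/
def TriangleGE (p : ℕ) [Fact p.Prime] (f : ℤ_[p] → ℚ_[p]) (c : ℤ) : Prop :=
  (∀ k : ℕ, 1 ≤ k →
    ‖f (k : ℤ_[p]) - f (kminus p k : ℤ_[p])‖ ≤
      ‖((k : ℚ_[p]) - (kminus p k : ℚ_[p]))‖ * (p : ℝ) ^ (-c))
  ∧ ‖f 0‖ ≤ (p : ℝ) ^ (-(c - 1))

/-!
Let `S n = ∑_{j < p^n} f j`. Since `j ↦ j % p^n` takes every value below `p^n` exactly `p`
times on `range (p^(n+1))`, `S (n+1) = p • S n + ∑_{j < p^(n+1)} (f j - f (j % p^n))`.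
The terms with `j < p^n` vanish, and for `p^n ≤ j < p^(n+1)` we have `j % p^n = j₋` with
`p^n ∣ j - j₋`, so each term has norm at most `p^(-c-n)`. The ultrametric inequality and
induction on `n` give `‖S n‖ ≤ p^(1-c-n)`, i.e. every Riemann sum `p^(-n) S n` has norm at
most `p^(1-c)`, and so does their limit.
-/
open Finset

theorem Finset.sum_range_mul_mod {M : Type*} [AddCommMonoid M] (F : ℕ → M) (a b : ℕ) :
    ∑ j ∈ range (a * b), F (j % b) = a • ∑ j ∈ range b, F j := by
  induction a with
  | zero => simp
  | succ a ih =>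
    rw [Nat.succ_mul, sum_range_add, ih, succ_nsmul]
    congr 1
    refine sum_congr rfl fun i hi => ?_
    rw [Nat.mul_add_mod_self_right, Nat.mod_eq_of_lt (mem_range.mp hi)]

theorem kminus_eq_mod {p k n : ℕ} (h₁ : p ^ n ≤ k) (h₂ : k < p ^ (n + 1)) :
    kminus p k = k % p ^ n := by
  rw [kminus, Nat.log_eq_of_pow_le_of_lt_pow h₁ h₂]

namespace Padic

variable {p : ℕ} [Fact p.Prime]

theorem norm_natCast_sub_mod_pow_le (k n : ℕ) :
    ‖(k : ℚ_[p]) - ((k % p ^ n : ℕ) : ℚ_[p])‖ ≤ (p : ℝ) ^ (-(n : ℤ)) := by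
  have hk : (k : ℚ_[p]) - ((k % p ^ n : ℕ) : ℚ_[p]) =
      (p : ℚ_[p]) ^ n * ((k / p ^ n : ℕ) : ℚ_[p]) := by
    rw [sub_eq_iff_eq_add]
    exact_mod_cast (Nat.div_add_mod k (p ^ n)).symm
  rw [hk, norm_mul, norm_p_pow]
  exact mul_le_of_le_one_right (by positivity) (IsUltrametricDist.norm_natCast_le_one _ _)

end Padic

namespace TriangleGE

variable {p : ℕ} [Fact p.Prime] {f : ℤ_[p] → ℚ_[p]} {c : ℤ}

theorem norm_sub_mod_pow_le (hc : TriangleGE p f c) {n j : ℕ} (hj : j < p ^ (n + 1)) :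
    ‖f j - f (j % p ^ n : ℕ)‖ ≤ (p : ℝ) ^ (-c - n) := by
  have hp : (0 : ℝ) < p := by exact_mod_cast (Fact.out : p.Prime).pos
  rcases lt_or_ge j (p ^ n) with hlt | hge
  · rw [Nat.mod_eq_of_lt hlt, sub_self, norm_zero]
    positivity
  · have hj1 : 1 ≤ j := le_trans (Nat.one_le_pow _ _ (Fact.out : p.Prime).pos) hge
    have hdiff := hc.1 j hj1
    rw [kminus_eq_mod hge hj] at hdiff
    calc ‖f j - f (j % p ^ n : ℕ)‖
        ≤ ‖(j : ℚ_[p]) - ((j % p ^ n : ℕ) : ℚ_[p])‖ * (p : ℝ) ^ (-c) := hdiff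
      _ ≤ (p : ℝ) ^ (-(n : ℤ)) * (p : ℝ) ^ (-c) := by
        gcongr
        exact Padic.norm_natCast_sub_mod_pow_le j n
      _ = (p : ℝ) ^ (-c - n) := by
        rw [← zpow_add₀ hp.ne']
        ring_nf

theorem norm_sum_range_pow_le (hc : TriangleGE p f c) (n : ℕ) :
    ‖∑ j ∈ range (p ^ n), f j‖ ≤ (p : ℝ) ^ (1 - c - n) := by
  have hp : (0 : ℝ) < p := by exact_mod_cast (Fact.out : p.Prime).pos
  induction n with
  | zero => simpa using hc.2
  | succ n ih =>
    have hsplit : ∑ j ∈ range (p ^ (n + 1)), f j =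
        ∑ j ∈ range (p ^ (n + 1)), (f j - f (j % p ^ n : ℕ)) +
          p • ∑ j ∈ range (p ^ n), f j := by
      rw [← sum_range_mul_mod (fun j : ℕ => f j) p (p ^ n), ← pow_succ', ← sum_add_distrib]
      exact sum_congr rfl fun j _ => (sub_add_cancel _ _).symm
    have hexp : (1 - c - (n + 1 : ℕ) : ℤ) = -c - n := by push_cast; ring
    rw [hsplit, hexp]
    refine (IsUltrametricDist.norm_add_le_max _ _).trans (max_le ?_ ?_)
    · refine IsUltrametricDist.norm_sum_le_of_forall_le_of_nonneg (by positivity) fun j hj => ?_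
      exact hc.norm_sub_mod_pow_le (mem_range.mp hj)
    · calc ‖p • ∑ j ∈ range (p ^ n), f j‖
          = (p : ℝ)⁻¹ * ‖∑ j ∈ range (p ^ n), f j‖ := by
            rw [nsmul_eq_mul, norm_mul, Padic.norm_p]
        _ ≤ (p : ℝ)⁻¹ * (p : ℝ) ^ (1 - c - n) := by gcongr
        _ = (p : ℝ) ^ (-c - n) := by
          rw [← zpow_neg_one, ← zpow_add₀ hp.ne']
          ring_nf

end TriangleGE

theorem volkenborn_integral_norm_estimate_general (p : ℕ) [Fact p.Prime]
    (f : ℤ_[p] → ℚ_[p])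
    (I : ℚ_[p]) (hI : IsVolkenbornIntegral p f I)
    (c : ℤ) (hc : TriangleGE p f c) :
    ‖I‖ ≤ (p : ℝ) ^ (-(c - 1)) := by
  have hp : (0 : ℝ) < p := by exact_mod_cast (Fact.out : p.Prime).pos
  refine le_of_tendsto' hI.norm fun n => ?_
  rw [norm_mul, norm_inv, Padic.norm_p_pow, ← zpow_neg, neg_neg]
  calc (p : ℝ) ^ (n : ℤ) * ‖∑ j ∈ range (p ^ n), f j‖
      ≤ (p : ℝ) ^ (n : ℤ) * (p : ℝ) ^ (1 - c - n) := by
        gcongr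
        exact hc.norm_sum_range_pow_le n
    _ = (p : ℝ) ^ (-(c - 1)) := by
      rw [← zpow_add₀ hp.ne']
      ring_nf

theorem volkenborn_integral_norm_estimate (p : ℕ) [Fact p.Prime]
    (f : ℤ_[p] → ℚ_[p]) (g : ℤ_[p] × ℤ_[p] → ℚ_[p])
    (hg : Continuous g)
    (hfg : ∀ x y : ℤ_[p], f x - f y = ((x : ℚ_[p]) - (y : ℚ_[p])) * g (x, y))
    (I : ℚ_[p]) (hI : IsVolkenbornIntegral p f I)
    (c : ℤ) (hc : TriangleGE p f c) :
    ‖I‖ ≤ (p : ℝ) ^ (-(c - 1)) :=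
  volkenborn_integral_norm_estimate_general p f I hI c hc
end

section
/- For integers n > 0 and j, let f(t) = C(t+j, n) = (t+j)(t+j−1)···(t+j−n+1)/n! as a function ℤ_p → ℚ_p. Then △(f) ≥ −⌊log n / log p⌋, where △(f) = min{ inf_{k≥1} v_p((f(k) − f(k_−))/(k − k_−)), 1 + v_p(f(0)) }. -/
/-- The binomial polynomial `C(t+j, n) = (t+j)(t+j-1)⋯(t+j-n+1)/n!`
as a function `ℤ_p → ℚ_p`. -/
noncomputable def binomFun (p : ℕ) [Fact p.Prime] (n : ℕ) (j : ℤ) (t : ℤ_[p]) : ℚ_[p] :=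
  (∏ i ∈ Finset.range n, ((t : ℚ_[p]) + (j : ℚ_[p]) - (i : ℚ_[p]))) / (n.factorial : ℚ_[p])

open Finset

namespace Padic

variable {p : ℕ} [Fact p.Prime]

lemma zpow_neg_log_le_norm_natCast {n i : ℕ} (hi : i ≠ 0) (hin : i ≤ n) :
    (p : ℝ) ^ (-(Nat.log p n : ℤ)) ≤ ‖(i : ℚ_[p])‖ := by
  rw [norm_eq_zpow_neg_valuation (Nat.cast_ne_zero.mpr hi), valuation_natCast]
  gcongr
  · exact_mod_cast (Fact.out : p.Prime).one_le
  · exact_mod_cast (padicValNat_le_nat_log i).trans (Nat.log_mono_right hin)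

lemma norm_choose_succ_le {n m i : ℕ} (hi : i < n) :
    ‖(m.choose (i + 1) : ℚ_[p])‖ ≤ ‖(m : ℚ_[p])‖ * (p : ℝ) ^ (Nat.log p n : ℤ) := by
  obtain _ | m := m
  · simp
  have hp : (0 : ℝ) < p := by exact_mod_cast (Fact.out : p.Prime).pos
  have hmul : ‖((m + 1).choose (i + 1) : ℚ_[p])‖ * ‖((i + 1 : ℕ) : ℚ_[p])‖ ≤
      ‖((m + 1 : ℕ) : ℚ_[p])‖ := by
    rw [← norm_mul, ← Nat.cast_mul, ← Nat.add_one_mul_choose_eq, Nat.cast_mul, norm_mul]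
    exact mul_le_of_le_one_right (norm_nonneg _) (by exact_mod_cast norm_int_le_one (m.choose i))
  calc ‖((m + 1).choose (i + 1) : ℚ_[p])‖
      = ‖((m + 1).choose (i + 1) : ℚ_[p])‖ * (p : ℝ) ^ (-(Nat.log p n : ℤ)) *
          (p : ℝ) ^ (Nat.log p n : ℤ) := by
        rw [mul_assoc, ← zpow_add₀ hp.ne', neg_add_cancel, zpow_zero, mul_one]
    _ ≤ ‖((m + 1 : ℕ) : ℚ_[p])‖ * (p : ℝ) ^ (Nat.log p n : ℤ) := by
        gcongr
        exact (mul_le_mul_of_nonneg_left (zpow_neg_log_le_norm_natCast i.succ_ne_zero hi)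
          (norm_nonneg _)).trans hmul

lemma norm_ringChoose_add_sub_le (x : ℤ) (m n : ℕ) :
    ‖((Ring.choose (x + m) n : ℤ) : ℚ_[p]) - (Ring.choose x n : ℤ)‖ ≤
      ‖(m : ℚ_[p])‖ * (p : ℝ) ^ (Nat.log p n : ℤ) := by
  have vandermonde : Ring.choose (x + m) n - Ring.choose x n =
      ∑ i ∈ range n, (m.choose (i + 1) : ℤ) * Ring.choose x (n - (i + 1)) := by
    rw [add_comm x, Ring.add_choose_eq n (Commute.all _ _),
      Nat.sum_antidiagonal_eq_sum_range_succ_mk, sum_range_succ']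
    simp only [Ring.choose_zero_right, one_mul, Nat.sub_zero, Ring.choose_natCast]
    ring
  rw [← Int.cast_sub, vandermonde, Int.cast_sum]
  refine IsUltrametricDist.norm_sum_le_of_forall_le_of_nonneg (by positivity) fun i hi => ?_
  rw [Int.cast_mul, norm_mul, Int.cast_natCast]
  exact (mul_le_of_le_one_right (norm_nonneg _) (norm_int_le_one _)).trans
    (norm_choose_succ_le (mem_range.mp hi))

lemma norm_ringChoose_sub_le (a b : ℤ) (n : ℕ) :
    ‖((Ring.choose a n : ℤ) : ℚ_[p]) - (Ring.choose b n : ℤ)‖ ≤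
      ‖(a : ℚ_[p]) - b‖ * (p : ℝ) ^ (Nat.log p n : ℤ) := by
  wlog hba : b ≤ a generalizing a b
  · simpa only [norm_sub_rev] using this b a (le_of_not_ge hba)
  obtain ⟨m, rfl⟩ : ∃ m : ℕ, a = b + m := ⟨(a - b).toNat, by omega⟩
  simpa using norm_ringChoose_add_sub_le b m n

end Padic

lemma binomFun_intCast {p : ℕ} [Fact p.Prime] (n : ℕ) (j z : ℤ) :
    binomFun p n j (z : ℤ_[p]) = ((Ring.choose (z + j) n : ℤ) : ℚ_[p]) := by
  have hprod : ∏ i ∈ range n, (((z : ℤ_[p]) : ℚ_[p]) + j - i) =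
      (n.factorial * Ring.choose (z + j) n : ℤ) := by
    rw [← nsmul_eq_mul, ← Ring.descPochhammer_eq_factorial_smul_choose,
      ← Polynomial.eval_eq_smeval, descPochhammer_eval_cast, descPochhammer_eval_eq_prod_range]
    push_cast
    rfl
  rw [binomFun, hprod, Int.cast_mul, Int.cast_natCast, mul_div_cancel_left₀]
  exact_mod_cast n.factorial_ne_zero

theorem triangle_binom_general (p : ℕ) [Fact p.Prime] (n : ℕ) (j : ℤ) :
    TriangleGE p (binomFun p n j) (-(Nat.log p n : ℤ)) := by
  refine ⟨fun k _ => ?_, ?_⟩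
  · rw [← Int.cast_natCast k, ← Int.cast_natCast (kminus p k), binomFun_intCast, binomFun_intCast,
      neg_neg]
    simpa using Padic.norm_ringChoose_sub_le (p := p) (k + j) (kminus p k + j) n
  · have hp : (1 : ℝ) ≤ p := by exact_mod_cast (Fact.out : p.Prime).one_le
    rw [← Int.cast_zero, binomFun_intCast]
    exact (Padic.norm_int_le_one _).trans (one_le_zpow₀ hp (by omega))

theorem triangle_binom (p : ℕ) [Fact p.Prime] (n : ℕ) (hn : 0 < n) (j : ℤ) :
    TriangleGE p (binomFun p n j) (-(Nat.log p n : ℤ)) :=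
  triangle_binom_general p n j
end
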